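/- arXiv:1404.7386 — 2 statements merged into one kernel-verified Lean document; each statement's English description precedes it below -/
import Mathlib

section
/- Let M be a finitely generated free module over ℋ and let A and B be two ℋ-submodules of M. Assume that the natural maps A/XA → M/XM and B/XB → M/XM (induced by the inclusions of A and B into M) are both injective, and that the images of A/XA and of B/XB inside M/XM intersect trivially (i.e. (A + XM) ∩ (B + XM) ⊆ XM). Then A ∩ B = {0}. -/
/-!
Statement 0.  `ℋ` is the ring of power series over `E` (a finite extension of `ℚ_p`
with its canonical absolute value) converging on the open `p`-adic unit disc.
If `M` is a finitely generated free `ℋ`-module and `A`, `B` are two `ℋ`-submodules of `M`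
such that the natural maps `A/XA → M/XM` and `B/XB → M/XM` are injective
(equivalently `A ∩ XM = XA` and `B ∩ XM = XB`) and the images of `A/XA` and `B/XB`
in `M/XM` intersect trivially (i.e. `(A + XM) ∩ (B + XM) ⊆ XM`), then `A ∩ B = 0`.
-/

open Filter PowerSeries Pointwise

/-- The ring `ℋ` of power series with coefficients in `E` that converge on the open
`p`-adic unit disc: all `f = ∑ aₙ Xⁿ` such that for every `0 ≤ r < 1` one has
`‖aₙ‖ * rⁿ → 0` as `n → ∞`. -/
noncomputable def Hcal (E : Type) [NormedField E] [IsUltrametricDist E] :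
    Subring (PowerSeries E) where
  carrier := {f | ∀ r : ℝ, 0 ≤ r → r < 1 →
    Tendsto (fun n : ℕ => ‖(PowerSeries.coeff (R := E) n) f‖ * r ^ n) atTop (nhds 0)}
  zero_mem' := by
    intro r hr hr1
    simp only [map_zero, norm_zero, zero_mul]
    exact tendsto_const_nhds
  one_mem' := by
    intro r hr hr1
    refine Tendsto.congr' ?_ (tendsto_const_nhds : Tendsto (fun _ : ℕ => (0 : ℝ)) atTop (nhds 0))
    filter_upwards [eventually_ge_atTop 1] with n hn
    rw [PowerSeries.coeff_one]
    simp [Nat.one_le_iff_ne_zero.mp hn]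
  add_mem' := by
    intro f g hf hg r hr hr1
    have h := (hf r hr hr1).add (hg r hr hr1)
    rw [add_zero] at h
    refine squeeze_zero (fun n => by positivity) (fun n => ?_) h
    rw [map_add]
    calc ‖(PowerSeries.coeff (R := E) n) f + (PowerSeries.coeff (R := E) n) g‖ * r ^ n
        ≤ (‖(PowerSeries.coeff (R := E) n) f‖ + ‖(PowerSeries.coeff (R := E) n) g‖) * r ^ n := by
          gcongr
          exact norm_add_le _ _
      _ = ‖(PowerSeries.coeff (R := E) n) f‖ * r ^ n + ‖(PowerSeries.coeff (R := E) n) g‖ * r ^ n := by ring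
  neg_mem' := by
    intro f hf r hr hr1
    simpa using hf r hr hr1
  mul_mem' := by
    intro f g hf hg r hr hr1
    obtain ⟨s, hrs, hs1⟩ : ∃ s : ℝ, r < s ∧ s < 1 := ⟨(r + 1) / 2, by linarith, by linarith⟩
    have hs0 : 0 < s := lt_of_le_of_lt hr hrs
    obtain ⟨Ca, hCa⟩ := (hf s hs0.le hs1).bddAbove_range
    obtain ⟨Cb, hCb⟩ := (hg s hs0.le hs1).bddAbove_range
    have hCa' : ∀ n : ℕ, ‖(PowerSeries.coeff (R := E) n) f‖ * s ^ n ≤ Ca :=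
      fun n => hCa (Set.mem_range_self n)
    have hCb' : ∀ n : ℕ, ‖(PowerSeries.coeff (R := E) n) g‖ * s ^ n ≤ Cb :=
      fun n => hCb (Set.mem_range_self n)
    have hCa0 : 0 ≤ Ca := le_trans (by positivity) (hCa' 0)
    have hCb0 : 0 ≤ Cb := le_trans (by positivity) (hCb' 0)
    have hlim : Tendsto (fun n : ℕ => Ca * Cb * (r / s) ^ n) atTop (nhds 0) := by
      have h := tendsto_pow_atTop_nhds_zero_of_lt_one (by positivity)
        ((div_lt_one hs0).mpr hrs)
      simpa using h.const_mul (Ca * Cb)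
    refine squeeze_zero (fun n => by positivity) (fun n => ?_) hlim
    have hbound : ‖(PowerSeries.coeff (R := E) n) (f * g)‖ ≤ Ca * Cb / s ^ n := by
      rw [PowerSeries.coeff_mul]
      refine IsUltrametricDist.norm_sum_le_of_forall_le_of_nonneg (by positivity) ?_
      rintro ⟨i, j⟩ hij
      replace hij : i + j = n := by simpa using hij
      rw [norm_mul]
      have h1 : ‖(PowerSeries.coeff (R := E) i) f‖ ≤ Ca / s ^ i :=
        (le_div_iff₀ (by positivity)).mpr (hCa' i)
      have h2 : ‖(PowerSeries.coeff (R := E) j) g‖ ≤ Cb / s ^ j :=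
        (le_div_iff₀ (by positivity)).mpr (hCb' j)
      calc ‖(PowerSeries.coeff (R := E) i) f‖ * ‖(PowerSeries.coeff (R := E) j) g‖
          ≤ (Ca / s ^ i) * (Cb / s ^ j) :=
            mul_le_mul h1 h2 (norm_nonneg _) (by positivity)
        _ = Ca * Cb / s ^ (i + j) := by rw [pow_add]; ring
        _ = Ca * Cb / s ^ n := by rw [hij]
    calc ‖(PowerSeries.coeff (R := E) n) (f * g)‖ * r ^ n
        ≤ (Ca * Cb / s ^ n) * r ^ n := by gcongr
      _ = Ca * Cb * (r / s) ^ n := by rw [div_pow]; ring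

/-!
Because `X` is a non-zero-divisor on the free module `M`, multiplication by `X` commutes with
intersections, so the hypotheses give `A ⊓ B = (A ⊓ XM) ⊓ (B ⊓ XM) = XA ⊓ XB = X(A ⊓ B)`.
Iterating, `A ⊓ B ⊆ XⁿM` for every `n`; reading this off coordinates in a basis, every coordinate
of an element of `A ⊓ B` is a power series divisible by all powers of `X`, hence zero.
-/

section Pointwise

variable {α R M : Type*} [Monoid α] [Semiring R] [AddCommMonoid M] [Module R M]
  [DistribMulAction α M] [SMulCommClass α R M]

theorem Submodule.pointwise_smul_inf {a : α} (ha : IsSMulRegular M a) (A B : Submodule R M) :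
    a • (A ⊓ B) = a • A ⊓ a • B :=
  Submodule.map_inf _ ha

theorem Submodule.inf_eq_smul_inf {a : α} (ha : IsSMulRegular M a) {A B : Submodule R M}
    (hA : A ⊓ a • ⊤ = a • A) (hB : B ⊓ a • ⊤ = a • B)
    (hAB : (A ⊔ a • ⊤) ⊓ (B ⊔ a • ⊤) ≤ a • ⊤) :
    A ⊓ B = a • (A ⊓ B) := by
  have hle : A ⊓ B ≤ a • ⊤ := (inf_le_inf le_sup_left le_sup_left).trans hAB
  calc A ⊓ B = (A ⊓ a • ⊤) ⊓ (B ⊓ a • ⊤) := by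
        rw [← inf_inf_distrib_right, inf_eq_left.mpr hle]
    _ = a • (A ⊓ B) := by rw [hA, hB, Submodule.pointwise_smul_inf ha]

end Pointwise

theorem Submodule.le_pow_smul_of_le_smul {R M : Type*} [CommSemiring R] [AddCommMonoid M]
    [Module R M] {I : Ideal R} {P : Submodule R M} (h : P ≤ I • P) :
    ∀ n : ℕ, P ≤ I ^ n • P
  | 0 => by rw [pow_zero, Ideal.one_eq_top, Submodule.top_smul]
  | n + 1 => by
    rw [pow_succ, Submodule.mul_smul]
    exact (le_pow_smul_of_le_smul h n).trans (Submodule.smul_mono le_rfl h)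

theorem Submodule.map_smul_top_le {R M N : Type*} [Semiring R] [AddCommMonoid M] [Module R M]
    [AddCommMonoid N] [Module R N] (I : Ideal R) (f : N →ₗ[R] M) :
    (I • ⊤ : Submodule R N).map f ≤ I • ⊤ := by
  rw [Submodule.map_smul'']
  exact Submodule.smul_mono le_rfl le_top

section Hausdorff

variable {R M : Type*} [CommRing R] [AddCommGroup M] [Module R M]

theorem Submodule.eq_bot_of_le_smul_of_isHausdorff {I : Ideal R} [IsHausdorff I M]
    {P : Submodule R M} (h : P ≤ I • P) : P = ⊥ := by
  refine eq_bot_iff.mpr fun x hx => (Submodule.mem_bot R).mpr ?_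
  refine IsHausdorff.haus ‹_› x fun n => SModEq.zero.mpr ?_
  exact Submodule.smul_mono le_rfl le_top (le_pow_smul_of_le_smul h n hx)

theorem IsHausdorff.of_free (I : Ideal R) [IsHausdorff I R] [Module.Free R M] :
    IsHausdorff I M := by
  let b := Module.Free.chooseBasis R M
  refine ⟨fun x hx => b.repr.injective (Finsupp.ext fun i => ?_)⟩
  rw [map_zero, Finsupp.zero_apply]
  refine IsHausdorff.haus ‹_› _ fun n => SModEq.zero.mpr ?_
  exact Submodule.map_smul_top_le _ (b.coord i)
    (Submodule.mem_map_of_mem (SModEq.zero.mp (hx n)))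

theorem isHausdorff_span_singleton_iff {r : R} :
    IsHausdorff (Ideal.span {r}) R ↔ ∀ f : R, (∀ n : ℕ, r ^ n ∣ f) → f = 0 := by
  simp [isHausdorff_iff, SModEq.zero, Ideal.span_singleton_pow, Ideal.mem_span_singleton]

end Hausdorff

theorem PowerSeries.eq_zero_of_forall_X_pow_dvd {R : Type*} [Semiring R] {f : R⟦X⟧}
    (h : ∀ n : ℕ, X ^ n ∣ f) : f = 0 := by
  ext m
  exact X_pow_dvd_iff.mp (h (m + 1)) m m.lt_succ_self

theorem Subring.isHausdorff_span_of_coe_eq_X {R : Type*} [CommRing R] {S : Subring R⟦X⟧}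
    {x : S} (hx : (x : R⟦X⟧) = X) : IsHausdorff (Ideal.span {x}) S :=
  isHausdorff_span_singleton_iff.mpr fun _ hf => Subtype.ext <|
    PowerSeries.eq_zero_of_forall_X_pow_dvd fun n => hx ▸ map_dvd S.subtype (hf n)

theorem inf_eq_bot_of_coinvariants_inf_eq_bot_general
    (E : Type) [NormedField E] [IsUltrametricDist E]
    (M : Type) [AddCommGroup M] [Module ↥(Hcal E) M]
    [Module.Free ↥(Hcal E) M]
    (X : ↥(Hcal E)) (hX : (X : PowerSeries E) = PowerSeries.X)
    (A B : Submodule ↥(Hcal E) M)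
    (hA : A ⊓ X • (⊤ : Submodule ↥(Hcal E) M) = X • A)
    (hB : B ⊓ X • (⊤ : Submodule ↥(Hcal E) M) = X • B)
    (hAB : (A ⊔ X • (⊤ : Submodule ↥(Hcal E) M)) ⊓ (B ⊔ X • (⊤ : Submodule ↥(Hcal E) M))
      ≤ X • (⊤ : Submodule ↥(Hcal E) M)) :
    A ⊓ B = ⊥ := by
  have hX0 : X ≠ 0 := fun h => PowerSeries.X_ne_zero (hX ▸ congrArg Subtype.val h)
  have hreg : IsSMulRegular M X := Module.IsTorsionFree.isSMulRegular (IsRegular.of_ne_zero hX0)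
  have := Subring.isHausdorff_span_of_coe_eq_X hX
  have := IsHausdorff.of_free (M := M) (Ideal.span {X})
  apply Submodule.eq_bot_of_le_smul_of_isHausdorff (I := Ideal.span {X})
  rw [Submodule.ideal_span_singleton_smul]
  exact (Submodule.inf_eq_smul_inf hreg hA hB hAB).le

set_option synthInstance.maxHeartbeats 1000000 in
/-- **Lemma 1 (Benois).**  Let `M` be a finitely generated free module over `ℋ` and let
`A`, `B` be two `ℋ`-submodules of `M`.  If the natural maps `A/XA → M/XM` and
`B/XB → M/XM` are injective (i.e. `A ∩ XM = XA` and `B ∩ XM = XB`) and the images of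
`A/XA` and `B/XB` inside `M/XM` intersect trivially (i.e. `(A + XM) ∩ (B + XM) ⊆ XM`),
then `A ∩ B = {0}`. -/
theorem inf_eq_bot_of_coinvariants_inf_eq_bot
    (p : ℕ) [Fact (Nat.Prime p)]
    (E : Type) [NormedField E] [IsUltrametricDist E]
    [NormedAlgebra ℚ_[p] E] [FiniteDimensional ℚ_[p] E]
    (hnorm : ∀ x : ℚ_[p], ‖algebraMap ℚ_[p] E x‖ = ‖x‖)
    (M : Type) [AddCommGroup M] [Module ↥(Hcal E) M]
    [Module.Free ↥(Hcal E) M] [Module.Finite ↥(Hcal E) M]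
    (X : ↥(Hcal E)) (hX : (X : PowerSeries E) = PowerSeries.X)
    (A B : Submodule ↥(Hcal E) M)
    (hA : A ⊓ X • (⊤ : Submodule ↥(Hcal E) M) = X • A)
    (hB : B ⊓ X • (⊤ : Submodule ↥(Hcal E) M) = X • B)
    (hAB : (A ⊔ X • (⊤ : Submodule ↥(Hcal E) M)) ⊓ (B ⊔ X • (⊤ : Submodule ↥(Hcal E) M))
      ≤ X • (⊤ : Submodule ↥(Hcal E) M)) :
    A ⊓ B = ⊥ :=
  inf_eq_bot_of_coinvariants_inf_eq_bot_general E M X hX A B hA hB hAB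
end

section
/- For every integer n ≥ 1, the ring ℋ_n = { ∑_{k≥0} a_k X^k ∈ E[[X]] : ‖a_k‖·p^{-k/n} → 0 as k → ∞ } (the ring of rigid analytic functions on the closed disc of radius p^{-1/n}) is a Euclidean ring; in particular it is an integral domain in which every ideal is principal (a principal ideal domain). -/
/-!
Put `c = p^{-1/n}`: `ℋₙ` consists of the power series `f = ∑ aₖ Xᵏ` with `‖aₖ‖ cᵏ → 0`, normed
by the Gauss norm `|f| = maxₖ ‖aₖ‖ cᵏ`. A nonzero `f` has a Weierstrass degree, the largest `d`
with `‖a_d‖ c^d = |f|`. In a Cauchy product `f g` the term `a_d b_e` strictly dominates all other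
terms of index `d + e` and all terms of larger index, so Weierstrass degrees add.

Let `g` have Weierstrass degree `d` and let `g₀` be its truncation of degree `d`; then
`|g - g₀| < |g|`. Dividing a truncation of `f` by the polynomial `g₀` gives `f = q g + r + f'`
with `deg r < d`, `|q| |g| ≤ |f|` and `|f'| ≤ a |f|` for a fixed `a < 1`. Iterating on `f'` and
summing the geometric series of quotients, which converges because `E` is complete, gives `q`
with `f - q g` a polynomial of degree `< d`: the Weierstrass degree is a Euclidean function.
-/

open Filter PowerSeries

section Aux

variable {E : Type} [NormedField E] [IsUltrametricDist E]

/-- Auxiliary: the coefficientwise convergence condition on a closed disc is stable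
under multiplication of power series (ultrametric Cauchy products). -/
private lemma mul_aux (ρ : ℕ → ℝ) (hpos : ∀ k, 0 < ρ k)
    (hadd : ∀ i j : ℕ, ρ i * ρ j = ρ (i + j)) {f g : PowerSeries E}
    (hf : Tendsto (fun k : ℕ => ‖(PowerSeries.coeff (R := E) k) f‖ * ρ k) atTop (nhds 0))
    (hg : Tendsto (fun k : ℕ => ‖(PowerSeries.coeff (R := E) k) g‖ * ρ k) atTop (nhds 0)) :
    Tendsto (fun k : ℕ => ‖(PowerSeries.coeff (R := E) k) (f * g)‖ * ρ k) atTop (nhds 0) := by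
  obtain ⟨Ca, hCa⟩ := hf.bddAbove_range
  obtain ⟨Cb, hCb⟩ := hg.bddAbove_range
  have hCa' : ∀ k : ℕ, ‖(PowerSeries.coeff (R := E) k) f‖ * ρ k ≤ Ca :=
    fun k => hCa (Set.mem_range_self k)
  have hCb' : ∀ k : ℕ, ‖(PowerSeries.coeff (R := E) k) g‖ * ρ k ≤ Cb :=
    fun k => hCb (Set.mem_range_self k)
  have hCa0 : 0 ≤ Ca := le_trans (mul_nonneg (norm_nonneg _) (hpos 0).le) (hCa' 0)
  have hCb0 : 0 ≤ Cb := le_trans (mul_nonneg (norm_nonneg _) (hpos 0).le) (hCb' 0)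
  obtain ⟨K, hK1, hCaK, hCbK⟩ : ∃ K : ℝ, 1 ≤ K ∧ Ca ≤ K ∧ Cb ≤ K :=
    ⟨max (max Ca Cb) 1, le_max_right _ _,
      le_trans (le_max_left _ _) (le_max_left _ _),
      le_trans (le_max_right _ _) (le_max_left _ _)⟩
  have hK0 : 0 < K := lt_of_lt_of_le one_pos hK1
  refine Metric.tendsto_atTop.mpr fun ε hε => ?_
  obtain ⟨δ, hδ, hδK⟩ : ∃ δ : ℝ, 0 < δ ∧ δ * K = ε / 2 :=
    ⟨ε / (2 * K), by positivity, by field_simp <;> ring⟩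
  obtain ⟨N1, hN1⟩ := Metric.tendsto_atTop.mp hf δ hδ
  obtain ⟨N2, hN2⟩ := Metric.tendsto_atTop.mp hg δ hδ
  refine ⟨N1 + N2, fun m hm => ?_⟩
  rw [Real.dist_eq, sub_zero, abs_of_nonneg (mul_nonneg (norm_nonneg _) (hpos m).le)]
  have hterm : ‖(PowerSeries.coeff (R := E) m) (f * g)‖ ≤ δ * K / ρ m := by
    rw [PowerSeries.coeff_mul]
    refine IsUltrametricDist.norm_sum_le_of_forall_le_of_nonneg
      (div_nonneg (mul_nonneg hδ.le hK0.le) (hpos m).le) ?_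
    rintro ⟨i, j⟩ hij
    replace hij : i + j = m := by simpa using hij
    rw [norm_mul]
    have key : ‖(PowerSeries.coeff (R := E) i) f‖ * ρ i * (‖(PowerSeries.coeff (R := E) j) g‖ * ρ j)
        ≤ δ * K := by
      rcases (show N1 ≤ i ∨ N2 ≤ j by omega) with h | h
      · have h1 : ‖(PowerSeries.coeff (R := E) i) f‖ * ρ i < δ := by
          have h' := hN1 i h
          rwa [Real.dist_eq, sub_zero,
            abs_of_nonneg (mul_nonneg (norm_nonneg _) (hpos i).le)] at h'
        calc ‖(PowerSeries.coeff (R := E) i) f‖ * ρ i * (‖(PowerSeries.coeff (R := E) j) g‖ * ρ j)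
            ≤ δ * Cb :=
              mul_le_mul h1.le (hCb' j) (mul_nonneg (norm_nonneg _) (hpos j).le) hδ.le
          _ ≤ δ * K := by gcongr
      · have h2 : ‖(PowerSeries.coeff (R := E) j) g‖ * ρ j < δ := by
          have h' := hN2 j h
          rwa [Real.dist_eq, sub_zero,
            abs_of_nonneg (mul_nonneg (norm_nonneg _) (hpos j).le)] at h'
        calc ‖(PowerSeries.coeff (R := E) i) f‖ * ρ i * (‖(PowerSeries.coeff (R := E) j) g‖ * ρ j)
            ≤ Ca * δ :=
              mul_le_mul (hCa' i) h2.le (mul_nonneg (norm_nonneg _) (hpos j).le) hCa0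
          _ ≤ K * δ := by gcongr
          _ = δ * K := mul_comm _ _
    have hρm : ρ i * ρ j = ρ m := by rw [hadd i j, hij]
    rw [le_div_iff₀ (hpos m)]
    calc ‖(PowerSeries.coeff (R := E) i) f‖ * ‖(PowerSeries.coeff (R := E) j) g‖ * ρ m
        = ‖(PowerSeries.coeff (R := E) i) f‖ * ρ i * (‖(PowerSeries.coeff (R := E) j) g‖ * ρ j) := by
          rw [← hρm]; ring
      _ ≤ δ * K := key
  calc ‖(PowerSeries.coeff (R := E) m) (f * g)‖ * ρ m ≤ (δ * K / ρ m) * ρ m :=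
        mul_le_mul_of_nonneg_right hterm (hpos m).le
    _ = δ * K := div_mul_cancel₀ _ (hpos m).ne'
    _ = ε / 2 := hδK
    _ < ε := by linarith

end Aux

/-- The ring `ℋₙ = Γ(Wₙ, 𝒪_{Wₙ})` of rigid analytic functions on the closed `p`-adic
disc of radius `p^{-1/n}`: all power series `∑ aₖ Xᵏ` over `E` such that
`‖aₖ‖ · p^{-k/n} → 0` as `k → ∞`. -/
noncomputable def Hn (p : ℕ) [hp : Fact (Nat.Prime p)] (E : Type) [NormedField E]
    [IsUltrametricDist E] (n : ℕ) : Subring (PowerSeries E) where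
  carrier := {f | Tendsto
    (fun k : ℕ => ‖(PowerSeries.coeff (R := E) k) f‖ * (p : ℝ) ^ (-(k : ℝ) / (n : ℝ)))
    atTop (nhds 0)}
  zero_mem' := by
    simp only [Set.mem_setOf_eq, map_zero, norm_zero, zero_mul]
    exact tendsto_const_nhds
  one_mem' := by
    refine Tendsto.congr' ?_ (tendsto_const_nhds : Tendsto (fun _ : ℕ => (0 : ℝ)) atTop (nhds 0))
    filter_upwards [eventually_ge_atTop 1] with k hk
    rw [PowerSeries.coeff_one]
    simp [Nat.one_le_iff_ne_zero.mp hk]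
  add_mem' := by
    intro f g hf hg
    have h := hf.add hg
    rw [add_zero] at h
    refine squeeze_zero (fun k => by positivity) (fun k => ?_) h
    rw [map_add]
    have hρ : (0 : ℝ) ≤ (p : ℝ) ^ (-(k : ℝ) / (n : ℝ)) :=
      Real.rpow_nonneg (by positivity) _
    calc ‖(PowerSeries.coeff (R := E) k) f + (PowerSeries.coeff (R := E) k) g‖ * (p : ℝ) ^ (-(k : ℝ) / (n : ℝ))
        ≤ (‖(PowerSeries.coeff (R := E) k) f‖ + ‖(PowerSeries.coeff (R := E) k) g‖) *
            (p : ℝ) ^ (-(k : ℝ) / (n : ℝ)) := by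
          gcongr
          exact norm_add_le _ _
      _ = ‖(PowerSeries.coeff (R := E) k) f‖ * (p : ℝ) ^ (-(k : ℝ) / (n : ℝ)) +
            ‖(PowerSeries.coeff (R := E) k) g‖ * (p : ℝ) ^ (-(k : ℝ) / (n : ℝ)) := by ring
  neg_mem' := by
    intro f hf
    simpa using hf
  mul_mem' := by
    intro f g hf hg
    have hp0 : (0 : ℝ) < (p : ℝ) := by exact_mod_cast hp.out.pos
    refine mul_aux (fun k : ℕ => (p : ℝ) ^ (-(k : ℝ) / (n : ℝ)))
      (fun k => Real.rpow_pos_of_pos hp0 _) (fun i j => ?_) hf hg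
    rw [← Real.rpow_add hp0]
    congr 1
    push_cast
    ring

open Topology Polynomial

namespace PowerSeries

section WeierstrassDegree

variable {E : Type*} [NormedField E] {c : ℝ} {f g : E⟦X⟧} {d e : ℕ}

def IsWeierstrassDegree (c : ℝ) (f : E⟦X⟧) (d : ℕ) : Prop :=
  (∀ k, ‖coeff k f‖ * c ^ k ≤ ‖coeff d f‖ * c ^ d) ∧
    ∀ k, d < k → ‖coeff k f‖ * c ^ k < ‖coeff d f‖ * c ^ d

theorem IsWeierstrassDegree.unique (h : IsWeierstrassDegree c f d)
    (h' : IsWeierstrassDegree c f e) : d = e := by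
  by_contra hne
  rcases Nat.lt_or_gt_of_ne hne with hlt | hlt
  · exact (h.2 e hlt).not_ge (h'.1 d)
  · exact (h'.2 d hlt).not_ge (h.1 e)

theorem IsWeierstrassDegree.pos (hc : 0 ≤ c) (h : IsWeierstrassDegree c f d) :
    0 < ‖coeff d f‖ * c ^ d :=
  (by positivity : 0 ≤ ‖coeff (d + 1) f‖ * c ^ (d + 1)).trans_lt (h.2 _ d.lt_succ_self)

theorem IsWeierstrassDegree.coeff_ne_zero (hc : 0 ≤ c) (h : IsWeierstrassDegree c f d) :
    coeff d f ≠ 0 := fun h0 => (h.pos hc).ne' (by rw [h0, norm_zero, zero_mul])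

theorem IsWeierstrassDegree.lt_of_coeff_eq_zero (hc : 0 ≤ c) (h : IsWeierstrassDegree c f d)
    (hf : ∀ k, e ≤ k → coeff k f = 0) : d < e :=
  lt_of_not_ge fun hed => h.coeff_ne_zero hc (hf d hed)

theorem IsWeierstrassDegree.mul_lt (hc : 0 ≤ c) (hf : IsWeierstrassDegree c f d)
    (hg : IsWeierstrassDegree c g e) {i j : ℕ} (hij : d < i ∨ e < j) :
    (‖coeff i f‖ * c ^ i) * (‖coeff j g‖ * c ^ j) <
      (‖coeff d f‖ * c ^ d) * (‖coeff e g‖ * c ^ e) := by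
  rcases hij with hi | hj
  · exact mul_lt_mul_of_lt_of_le_of_nonneg_of_pos (hf.2 i hi) (hg.1 j) (by positivity)
      (hg.pos hc)
  · exact mul_lt_mul' (hf.1 i) (hg.2 j hj) (by positivity) (hf.pos hc)

theorem not_isWeierstrassDegree_zero : ¬ IsWeierstrassDegree c (0 : E⟦X⟧) d := fun h => by
  simpa using h.2 (d + 1) d.lt_succ_self

theorem IsWeierstrassDegree.gaussNorm_eq (h : IsWeierstrassDegree c f d) :
    gaussNorm norm c f = ‖coeff d f‖ * c ^ d := by
  rw [PowerSeries.gaussNorm_eq]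
  exact le_antisymm (ciSup_le h.1) (le_ciSup ⟨_, Set.forall_mem_range.2 h.1⟩ d)

theorem IsWeierstrassDegree.gaussNorm_pos (hc : 0 ≤ c) (h : IsWeierstrassDegree c f d) :
    0 < gaussNorm norm c f :=
  h.gaussNorm_eq ▸ h.pos hc

theorem IsWeierstrassDegree.coe_trunc (hc : 0 ≤ c) (h : IsWeierstrassDegree c f d) :
    IsWeierstrassDegree c (trunc (d + 1) f : E⟦X⟧) d := by
  have hd : coeff d (trunc (d + 1) f : E⟦X⟧) = coeff d f := by
    simp [Polynomial.coeff_coe, coeff_trunc]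
  refine ⟨fun k => ?_, fun k hk => ?_⟩ <;> rw [hd, Polynomial.coeff_coe, coeff_trunc]
  · split_ifs
    exacts [h.1 k, by simpa using (h.pos hc).le]
  · rw [if_neg (by omega), norm_zero, zero_mul]
    exact h.pos hc

theorem IsWeierstrassDegree.degree_trunc (hc : 0 ≤ c) (h : IsWeierstrassDegree c f d) :
    (trunc (d + 1) f).degree = d :=
  Polynomial.degree_eq_of_le_of_coeff_ne_zero (Order.le_of_lt_succ (degree_trunc_lt f (d + 1)))
    (by simpa [Polynomial.coeff_coe] using (h.coe_trunc hc).coeff_ne_zero hc)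

theorem IsWeierstrassDegree.gaussNorm_coe_trunc (hc : 0 ≤ c) (h : IsWeierstrassDegree c f d) :
    gaussNorm norm c (trunc (d + 1) f : E⟦X⟧) = gaussNorm norm c f := by
  rw [(h.coe_trunc hc).gaussNorm_eq, h.gaussNorm_eq, Polynomial.coeff_coe, coeff_trunc,
    if_pos d.lt_succ_self]

/-- `⊥` when `f` has no Weierstrass degree, e.g. for `f = 0`. -/
noncomputable def weierstrassDegree (c : ℝ) (f : E⟦X⟧) : WithBot ℕ :=
  open Classical in if h : ∃ d, IsWeierstrassDegree c f d then (h.choose : ℕ) else ⊥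

theorem IsWeierstrassDegree.weierstrassDegree_eq (h : IsWeierstrassDegree c f d) :
    weierstrassDegree c f = d := by
  have hex : ∃ d, IsWeierstrassDegree c f d := ⟨d, h⟩
  rw [weierstrassDegree, dif_pos hex, hex.choose_spec.unique h]

theorem weierstrassDegree_zero : weierstrassDegree c (0 : E⟦X⟧) = ⊥ :=
  dif_neg fun ⟨_, h⟩ => not_isWeierstrassDegree_zero h

end WeierstrassDegree

section GaussNorm

variable {E : Type*} [NormedField E] {c : ℝ} {f g : E⟦X⟧} {d : ℕ}

theorem IsRestricted.hasGaussNorm (hf : IsRestricted c f) : HasGaussNorm norm c f :=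
  ((isRestricted_iff' c f).1 hf).bddAbove_range

@[simp]
theorem gaussNorm_norm_zero : gaussNorm norm c (0 : E⟦X⟧) = 0 :=
  gaussNorm_zero _ _ norm_zero

theorem gaussNorm_le {C : ℝ} (h : ∀ k, ‖coeff k f‖ * c ^ k ≤ C) : gaussNorm norm c f ≤ C :=
  (gaussNorm_eq norm c f).trans_le (ciSup_le h)

theorem norm_coeff_le_gaussNorm_div (hc : 0 < c) (hf : HasGaussNorm norm c f) (k : ℕ) :
    ‖coeff k f‖ ≤ gaussNorm norm c f / c ^ k :=
  (le_div_iff₀ (by positivity)).2 (le_gaussNorm norm c f hf k)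

theorem gaussNorm_trunc_le (hf : HasGaussNorm norm c f) (n : ℕ) :
    gaussNorm norm c (trunc n f : E⟦X⟧) ≤ gaussNorm norm c f :=
  gaussNorm_le fun k => by
    rw [Polynomial.coeff_coe, coeff_trunc]
    split_ifs
    exacts [le_gaussNorm norm c f hf k, by simpa using gaussNorm_nonneg norm c f norm_nonneg]

theorem isRestricted_coe (P : E[X]) : IsRestricted c (P : E⟦X⟧) := by
  rw [isRestricted_iff']
  refine tendsto_const_nhds.congr' ?_
  filter_upwards [eventually_gt_atTop P.natDegree] with k hk
  rw [Polynomial.coeff_coe, Polynomial.coeff_eq_zero_of_natDegree_lt hk, norm_zero, zero_mul]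

theorem coe_eq_div_mul_add_mod (F P : E[X]) :
    (F : E⟦X⟧) = (F / P : E[X]) * (P : E⟦X⟧) + (F % P : E[X]) := by
  conv_lhs => rw [← EuclideanDomain.div_add_mod F P]
  push_cast
  ring

theorem coeff_sub_trunc (f : E⟦X⟧) (n k : ℕ) :
    coeff k (f - (trunc n f : E⟦X⟧)) = if k < n then 0 else coeff k f := by
  rw [map_sub, Polynomial.coeff_coe, coeff_trunc]
  split_ifs <;> simp

theorem IsRestricted.exists_gaussNorm_sub_trunc_le (hf : IsRestricted c f) {ε : ℝ} (hε : 0 < ε) :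
    ∃ N, gaussNorm norm c (f - (trunc N f : E⟦X⟧)) ≤ ε := by
  obtain ⟨N, hN⟩ := eventually_atTop.1 ((tendsto_order.1 ((isRestricted_iff' c f).1 hf)).2 ε hε)
  refine ⟨N, gaussNorm_le fun k => ?_⟩
  rw [coeff_sub_trunc]
  split_ifs with hk
  · simpa using hε.le
  · exact (hN k (not_lt.1 hk)).le

theorem IsRestricted.sub (hf : IsRestricted c f) (hg : IsRestricted c g) :
    IsRestricted c (f - g) :=
  sub_eq_add_neg f g ▸ isRestricted.add c hf (isRestricted.neg c hg)

theorem IsRestricted.exists_isWeierstrassDegree (hc : 0 < c) (hf : IsRestricted c f)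
    (hf0 : f ≠ 0) : ∃ d, IsWeierstrassDegree c f d := by
  classical
  set w : ℕ → ℝ := fun k => ‖coeff k f‖ * c ^ k
  obtain ⟨k₀, hk₀⟩ := exists_coeff_ne_zero_iff_ne_zero.2 hf0
  have hw₀ : 0 < w k₀ := by have := norm_pos_iff.2 hk₀; positivity
  obtain ⟨N, hN⟩ := eventually_atTop.1
    ((tendsto_order.1 ((isRestricted_iff' c f).1 hf)).2 _ hw₀)
  have hk₀N : k₀ < N := lt_of_not_ge fun h => (hN k₀ h).false
  obtain ⟨K, hKN, hK⟩ := (Finset.range N).exists_max_image w ⟨k₀, Finset.mem_range.2 hk₀N⟩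
  have hmax : ∀ k, w k ≤ w K := fun k => by
    by_cases hk : k < N
    · exact hK k (Finset.mem_range.2 hk)
    · exact (hN k (not_lt.1 hk)).le.trans (hK k₀ (Finset.mem_range.2 hk₀N))
  set d := Nat.findGreatest (fun k => w k = w K) N
  have hd : w d = w K :=
    Nat.findGreatest_spec (P := fun k => w k = w K) (Finset.mem_range.1 hKN).le rfl
  refine ⟨d, fun k => (hmax k).trans hd.ge, fun k hdk => ?_⟩
  show w k < w d
  rw [hd]
  by_cases hk : k ≤ N
  · exact (hmax k).lt_of_ne (Nat.findGreatest_is_greatest hdk hk)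
  · exact (hN k (by omega)).trans_le (hK k₀ (Finset.mem_range.2 hk₀N))

theorem IsWeierstrassDegree.gaussNorm_sub_trunc_lt (hc : 0 < c) (hg : IsRestricted c g)
    (hd : IsWeierstrassDegree c g d) :
    gaussNorm norm c (g - (trunc (d + 1) g : E⟦X⟧)) < gaussNorm norm c g := by
  set t := g - (trunc (d + 1) g : E⟦X⟧)
  rw [hd.gaussNorm_eq]
  by_cases ht0 : t = 0
  · rw [ht0, gaussNorm_norm_zero]
    exact hd.pos hc.le
  obtain ⟨e, he⟩ := (hg.sub (isRestricted_coe _)).exists_isWeierstrassDegree hc ht0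
  have hde : d < e := lt_of_not_ge fun hed =>
    he.coeff_ne_zero hc.le ((coeff_sub_trunc g _ e).trans (if_pos (Nat.lt_succ_of_le hed)))
  rw [he.gaussNorm_eq, coeff_sub_trunc, if_neg (by omega)]
  exact hd.2 e hde

end GaussNorm

section Ultrametric

open Finset.HasAntidiagonal

variable {E : Type*} [NormedField E] [IsUltrametricDist E] {c : ℝ} {f g : E⟦X⟧} {d e : ℕ}

theorem isRestricted_of_forall_exists_le (hc : 0 ≤ c)
    (h : ∀ ε > 0, ∃ g, IsRestricted c g ∧ ∀ k, ‖coeff k (f - g)‖ * c ^ k ≤ ε) :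
    IsRestricted c f := by
  rw [isRestricted_iff']
  refine tendsto_order.2 ⟨fun a ha => Eventually.of_forall fun k => ha.trans_le (by positivity),
    fun ε hε => ?_⟩
  obtain ⟨g, hg, hfg⟩ := h (ε / 2) (half_pos hε)
  filter_upwards [(tendsto_order.1 ((isRestricted_iff' c g).1 hg)).2 _ (half_pos hε)] with k hk
  calc ‖coeff k f‖ * c ^ k ≤ max ‖coeff k (f - g)‖ ‖coeff k g‖ * c ^ k := by
        gcongr
        simpa using IsUltrametricDist.norm_add_le_max (coeff k (f - g)) (coeff k g)
    _ = max (‖coeff k (f - g)‖ * c ^ k) (‖coeff k g‖ * c ^ k) :=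
        max_mul_of_nonneg _ _ (by positivity)
    _ < ε := max_lt ((hfg k).trans_lt (half_lt_self hε)) (hk.trans (half_lt_self hε))

theorem exists_norm_coeff_mul_mul_pow_le (hc : 0 ≤ c) (f g : E⟦X⟧) (k : ℕ) :
    ∃ i j, i + j = k ∧
      ‖coeff k (f * g)‖ * c ^ k ≤ (‖coeff i f‖ * c ^ i) * (‖coeff j g‖ * c ^ j) := by
  obtain ⟨⟨i, j⟩, hij, h⟩ := IsUltrametricDist.exists_norm_finsetSum_le_of_nonempty
    (t := antidiagonal k) ⟨(0, k), by simp⟩ fun p : ℕ × ℕ => coeff p.1 f * coeff p.2 g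
  rw [mem_antidiagonal] at hij
  refine ⟨i, j, hij, ?_⟩
  rw [coeff_mul]
  calc _ ≤ ‖coeff i f * coeff j g‖ * c ^ k := by gcongr
    _ = _ := by rw [norm_mul, ← hij, pow_add]; ring

theorem gaussNorm_mul_le (hc : 0 ≤ c) (hf : HasGaussNorm norm c f)
    (hg : HasGaussNorm norm c g) :
    gaussNorm norm c (f * g) ≤ gaussNorm norm c f * gaussNorm norm c g :=
  gaussNorm_le fun k => by
    obtain ⟨i, j, -, h⟩ := exists_norm_coeff_mul_mul_pow_le hc f g k
    exact h.trans (mul_le_mul (le_gaussNorm norm c f hf i) (le_gaussNorm norm c g hg j)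
      (by positivity) (gaussNorm_nonneg norm c f norm_nonneg))

theorem gaussNorm_sub_le_max (hc : 0 ≤ c) (hf : HasGaussNorm norm c f)
    (hg : HasGaussNorm norm c g) :
    gaussNorm norm c (f - g) ≤ max (gaussNorm norm c f) (gaussNorm norm c g) :=
  gaussNorm_le fun k => by
    calc ‖coeff k (f - g)‖ * c ^ k ≤ max ‖coeff k f‖ ‖coeff k g‖ * c ^ k := by
          rw [map_sub, sub_eq_add_neg, ← norm_neg (coeff k g)]
          gcongr
          exact IsUltrametricDist.norm_add_le_max _ _
      _ = max (‖coeff k f‖ * c ^ k) (‖coeff k g‖ * c ^ k) :=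
          max_mul_of_nonneg _ _ (by positivity)
      _ ≤ _ := max_le_max (le_gaussNorm norm c f hf k) (le_gaussNorm norm c g hg k)

theorem IsWeierstrassDegree.norm_coeff_mul_mul_pow (hc : 0 < c) (hf : IsWeierstrassDegree c f d)
    (hg : IsWeierstrassDegree c g e) :
    ‖coeff (d + e) (f * g)‖ * c ^ (d + e) = (‖coeff d f‖ * c ^ d) * (‖coeff e g‖ * c ^ e) := by
  have hde : ‖coeff d f * coeff e g‖ * c ^ (d + e) =
      (‖coeff d f‖ * c ^ d) * (‖coeff e g‖ * c ^ e) := by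
    rw [norm_mul, pow_add]; ring
  rw [← hde, coeff_mul, 
    ← Finset.add_sum_erase _ _ (mem_antidiagonal.2 rfl : (d, e) ∈ antidiagonal (d + e))]
  congr 1
  set rest := ∑ p ∈ (antidiagonal (d + e)).erase (d, e), coeff p.1 f * coeff p.2 g
  have hrest : ‖rest‖ * c ^ (d + e) < ‖coeff d f * coeff e g‖ * c ^ (d + e) := by
    rw [hde]
    rcases ((antidiagonal (d + e)).erase (d, e)).eq_empty_or_nonempty with hs | hs
    · rw [show rest = 0 from Finset.sum_eq_zero (by simp [hs]), norm_zero, zero_mul]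
      exact mul_pos (hf.pos hc.le) (hg.pos hc.le)
    obtain ⟨⟨i, j⟩, hij, hle⟩ := IsUltrametricDist.exists_norm_finsetSum_le_of_nonempty hs
      fun p : ℕ × ℕ => coeff p.1 f * coeff p.2 g
    rw [Finset.mem_erase, mem_antidiagonal, Ne, Prod.mk.injEq] at hij
    calc ‖rest‖ * c ^ (d + e) ≤ ‖coeff i f * coeff j g‖ * c ^ (i + j) := by
          rw [hij.2]; gcongr
      _ = (‖coeff i f‖ * c ^ i) * (‖coeff j g‖ * c ^ j) := by rw [norm_mul, pow_add]; ring
      _ < _ := hf.mul_lt hc.le hg (by omega)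
  have hlt := lt_of_mul_lt_mul_right hrest (by positivity)
  rw [IsUltrametricDist.norm_add_eq_max_of_norm_ne_norm hlt.ne', max_eq_left hlt.le]

theorem IsWeierstrassDegree.mul (hc : 0 < c) (hf : IsWeierstrassDegree c f d)
    (hg : IsWeierstrassDegree c g e) : IsWeierstrassDegree c (f * g) (d + e) := by
  unfold IsWeierstrassDegree
  rw [hf.norm_coeff_mul_mul_pow hc hg]
  refine ⟨fun k => ?_, fun k hk => ?_⟩ <;>
    obtain ⟨i, j, hij, hle⟩ := exists_norm_coeff_mul_mul_pow_le hc.le f g k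
  · exact hle.trans (mul_le_mul (hf.1 i) (hg.1 j) (by positivity) (hf.pos hc.le).le)
  · exact hle.trans_lt (hf.mul_lt hc.le hg (by omega))

theorem IsWeierstrassDegree.gaussNorm_mul_le_gaussNorm_mul_add (hc : 0 < c)
    (hg : IsWeierstrassDegree c g d) {q r : E⟦X⟧} (hq : IsRestricted c q)
    (hr : ∀ k, d ≤ k → coeff k r = 0) (h : HasGaussNorm norm c (q * g + r)) :
    gaussNorm norm c q * gaussNorm norm c g ≤ gaussNorm norm c (q * g + r) := by
  by_cases hq0 : q = 0
  · rw [hq0, gaussNorm_norm_zero, zero_mul]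
    exact gaussNorm_nonneg norm c _ norm_nonneg
  obtain ⟨e, he⟩ := hq.exists_isWeierstrassDegree hc hq0
  calc gaussNorm norm c q * gaussNorm norm c g
      = ‖coeff (e + d) (q * g)‖ * c ^ (e + d) := by
        rw [he.gaussNorm_eq, hg.gaussNorm_eq, he.norm_coeff_mul_mul_pow hc hg]
    _ = ‖coeff (e + d) (q * g + r)‖ * c ^ (e + d) := by
        rw [map_add, hr _ (by omega), add_zero]
    _ ≤ gaussNorm norm c (q * g + r) := le_gaussNorm norm c _ h _

theorem IsWeierstrassDegree.gaussNorm_div_mul_le (hc : 0 < c) {P : E[X]}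
    (hP : IsWeierstrassDegree c (P : E⟦X⟧) d) (hPd : P.degree = d) (F : E[X]) :
    gaussNorm norm c ((F / P : E[X]) : E⟦X⟧) * gaussNorm norm c (P : E⟦X⟧) ≤
      gaussNorm norm c (F : E⟦X⟧) := by
  have hP0 : P ≠ 0 := by
    rintro rfl
    simp at hPd
  have hmod : ∀ k, d ≤ k → coeff k ((F % P : E[X]) : E⟦X⟧) = 0 := fun k hk => by
    rw [Polynomial.coeff_coe]
    exact Polynomial.coeff_eq_zero_of_degree_lt
      ((Polynomial.degree_mod_lt F hP0).trans_le (hPd ▸ WithBot.coe_le_coe.2 hk))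
  rw [coe_eq_div_mul_add_mod F P]
  exact hP.gaussNorm_mul_le_gaussNorm_mul_add hc (isRestricted_coe _) hmod
    (coe_eq_div_mul_add_mod F P ▸ (isRestricted_coe F).hasGaussNorm)

theorem IsWeierstrassDegree.exists_approx_div (hc : 0 < c) (hg : IsRestricted c g)
    (hd : IsWeierstrassDegree c g d) {a : ℝ} (ha : 0 < a)
    (htail : gaussNorm norm c (g - (trunc (d + 1) g : E⟦X⟧)) ≤ a * gaussNorm norm c g)
    (hf : IsRestricted c f) :
    ∃ q r : E[X], r.degree < d ∧
      gaussNorm norm c (q : E⟦X⟧) * gaussNorm norm c g ≤ gaussNorm norm c f ∧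
      gaussNorm norm c (f - (q : E⟦X⟧) * g - (r : E⟦X⟧)) ≤ a * gaussNorm norm c f := by
  by_cases hf0 : f = 0
  · exact ⟨0, 0, WithBot.bot_lt_coe d, by simp [hf0], by simp [hf0]⟩
  obtain ⟨df, hdf⟩ := hf.exists_isWeierstrassDegree hc hf0
  obtain ⟨N, hN⟩ := hf.exists_gaussNorm_sub_trunc_le (mul_pos ha (hdf.gaussNorm_pos hc.le))
  set F := trunc N f
  set g₀ := trunc (d + 1) g
  have hg₀ : IsWeierstrassDegree c (g₀ : E⟦X⟧) d := hd.coe_trunc hc.le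
  have hg₀d : g₀.degree = d := hd.degree_trunc hc.le
  have hg₀0 : g₀ ≠ 0 := by
    rintro h
    simp [h] at hg₀d
  set q := F / g₀
  have hq : gaussNorm norm c (q : E⟦X⟧) * gaussNorm norm c g ≤ gaussNorm norm c f :=
    calc gaussNorm norm c (q : E⟦X⟧) * gaussNorm norm c g
        = gaussNorm norm c (q : E⟦X⟧) * gaussNorm norm c (g₀ : E⟦X⟧) := by
          rw [hd.gaussNorm_coe_trunc hc.le]
      _ ≤ gaussNorm norm c (F : E⟦X⟧) := hg₀.gaussNorm_div_mul_le hc hg₀d F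
      _ ≤ gaussNorm norm c f := gaussNorm_trunc_le hf.hasGaussNorm N
  refine ⟨q, F % g₀, hg₀d ▸ Polynomial.degree_mod_lt F hg₀0, hq, ?_⟩
  rw [show f - (q : E⟦X⟧) * g - (F % g₀ : E[X]) = (f - F) - q * (g - (g₀ : E⟦X⟧)) by
    rw [coe_eq_div_mul_add_mod F g₀]; ring]
  refine (gaussNorm_sub_le_max hc.le (hf.sub (isRestricted_coe F)).hasGaussNorm
    (isRestricted.mul c (isRestricted_coe q) (hg.sub (isRestricted_coe g₀))).hasGaussNorm).trans
    (max_le hN ?_)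
  calc gaussNorm norm c ((q : E⟦X⟧) * (g - (g₀ : E⟦X⟧)))
      ≤ gaussNorm norm c (q : E⟦X⟧) * gaussNorm norm c (g - (g₀ : E⟦X⟧)) :=
        gaussNorm_mul_le hc.le (isRestricted_coe q).hasGaussNorm
          (hg.sub (isRestricted_coe g₀)).hasGaussNorm
    _ ≤ gaussNorm norm c (q : E⟦X⟧) * (a * gaussNorm norm c g) := by
        gcongr
        exact gaussNorm_nonneg norm c _ norm_nonneg
    _ ≤ a * gaussNorm norm c f := by
        rw [mul_left_comm]
        gcongr

end Ultrametric

section PiTopology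

open scoped WithPiTopology

theorem coeff_sub_tsum_mul_eq_zero {R : Type*} [Ring R] [TopologicalSpace R] [IsTopologicalRing R]
    [T2Space R] {u : ℕ → R⟦X⟧} (hu : Summable u) (f g : R⟦X⟧) {k : ℕ}
    (h : Tendsto (fun M => coeff k (f - (∑ m ∈ Finset.range M, u m) * g)) atTop (𝓝 0)) :
    coeff k (f - (∑' m, u m) * g) = 0 :=
  tendsto_nhds_unique (((WithPiTopology.continuous_coeff R k).tendsto _).comp
    (tendsto_const_nhds.sub (hu.hasSum.tendsto_sum_nat.mul_const g))) h

end PiTopology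

section Completeness

open scoped WithPiTopology

variable {E : Type*} [NormedField E] [IsUltrametricDist E] [CompleteSpace E] {c : ℝ}
  {u : ℕ → E⟦X⟧}

theorem summable_of_tendsto_gaussNorm (hc : 0 < c) (hu : ∀ m, IsRestricted c (u m))
    (h : Tendsto (fun m => gaussNorm norm c (u m)) atTop (𝓝 0)) : Summable u := by
  refine (WithPiTopology.summable_iff_summable_coeff E).2 fun k =>
    NonarchimedeanAddGroup.summable_of_tendsto_cofinite_zero ?_
  rw [Nat.cofinite_eq_atTop]
  refine squeeze_zero_norm (fun m => norm_coeff_le_gaussNorm_div hc (hu m).hasGaussNorm k) ?_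
  simpa using h.div_const (c ^ k)

theorem isRestricted_tsum (hc : 0 < c) (hu : ∀ m, IsRestricted c (u m))
    (h : Tendsto (fun m => gaussNorm norm c (u m)) atTop (𝓝 0)) :
    IsRestricted c (∑' m, u m) := by
  refine isRestricted_of_forall_exists_le hc.le fun ε hε => ?_
  obtain ⟨M, hM⟩ := eventually_atTop.1 ((tendsto_order.1 h).2 ε hε)
  have hsum := summable_of_tendsto_gaussNorm hc hu h
  refine ⟨∑ m ∈ Finset.range M, u m,
    (IsRestricted.subring c).sum_mem fun m _ => hu m, fun k => ?_⟩
  have htail := (WithPiTopology.hasSum_iff_hasSum_coeff E).1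
    ((summable_nat_add_iff M).2 hsum).hasSum k
  rw [← hsum.sum_add_tsum_nat_add M, add_sub_cancel_left, ← htail.tsum_eq]
  refine (mul_le_mul_of_nonneg_right (IsUltrametricDist.norm_tsum_le_of_forall_le_of_nonneg
    (by positivity : 0 ≤ ε / c ^ k) fun m => ?_) (by positivity)).trans_eq
    (div_mul_cancel₀ _ (by positivity))
  exact (norm_coeff_le_gaussNorm_div hc (hu _).hasGaussNorm k).trans
    (by gcongr; exact (hM _ (by omega)).le)

theorem exists_coeff_sub_mul_eq_zero_of_approx_div (hc : 0 < c) {f g : E⟦X⟧} {d : ℕ}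
    (hg : IsRestricted c g) (hG : 0 < gaussNorm norm c g) {a : ℝ} (ha0 : 0 ≤ a) (ha1 : a < 1)
    (happrox : ∀ f, IsRestricted c f → ∃ q r : E[X], r.degree < d ∧
      gaussNorm norm c (q : E⟦X⟧) * gaussNorm norm c g ≤ gaussNorm norm c f ∧
      gaussNorm norm c (f - (q : E⟦X⟧) * g - (r : E⟦X⟧)) ≤ a * gaussNorm norm c f)
    (hf : IsRestricted c f) :
    ∃ q, IsRestricted c q ∧ ∀ k, d ≤ k → coeff k (f - q * g) = 0 := by
  choose! q r hr hq hs using happrox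
  -- `s m` is what is left of `f` after `m` approximate divisions
  set s : ℕ → E⟦X⟧ := fun m => (fun h => h - (q h : E⟦X⟧) * g - (r h : E⟦X⟧))^[m] f
  have hs_succ : ∀ m, s (m + 1) = s m - (q (s m) : E⟦X⟧) * g - (r (s m) : E⟦X⟧) := fun m =>
    Function.iterate_succ_apply' _ m f
  have hs_res : ∀ m, IsRestricted c (s m) := fun m => by
    induction m with
    | zero => exact hf
    | succ m ih =>
      rw [hs_succ]
      exact (ih.sub (isRestricted.mul c (isRestricted_coe _) hg)).sub (isRestricted_coe _)
  have hs_le : ∀ m, gaussNorm norm c (s m) ≤ a ^ m * gaussNorm norm c f := fun m => by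
    induction m with
    | zero => simp [s]
    | succ m ih =>
      rw [hs_succ, pow_succ', mul_assoc]
      exact (hs _ (hs_res m)).trans (by gcongr)
  have hgeom : Tendsto (fun m => a ^ m * gaussNorm norm c f) atTop (𝓝 0) := by
    simpa using (tendsto_pow_atTop_nhds_zero_of_lt_one ha0 ha1).mul_const (gaussNorm norm c f)
  have hu : Tendsto (fun m => gaussNorm norm c (q (s m) : E⟦X⟧)) atTop (𝓝 0) :=
    squeeze_zero (fun m => gaussNorm_nonneg _ _ _ norm_nonneg)
      (fun m => (le_div_iff₀ hG).2 ((hq _ (hs_res m)).trans (hs_le m)))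
      (by simpa using hgeom.div_const (gaussNorm norm c g))
  refine ⟨∑' m, (q (s m) : E⟦X⟧), isRestricted_tsum hc (fun m => isRestricted_coe _) hu,
    fun k hk => coeff_sub_tsum_mul_eq_zero
      (summable_of_tendsto_gaussNorm hc (fun m => isRestricted_coe _) hu) f g ?_⟩
  have hcoeff : ∀ M,
      coeff k (f - (∑ m ∈ Finset.range M, (q (s m) : E⟦X⟧)) * g) = coeff k (s M) := fun M => by
    induction M with
    | zero => simp [s]
    | succ M ih =>
      rw [Finset.sum_range_succ, add_mul, ← sub_sub, map_sub, ih, hs_succ, map_sub (coeff k),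
        Polynomial.coeff_coe, Polynomial.coeff_eq_zero_of_degree_lt
          ((hr _ (hs_res M)).trans_le (WithBot.coe_le_coe.2 hk)), sub_zero, map_sub]
  simp_rw [hcoeff]
  refine squeeze_zero_norm (fun M =>
    (norm_coeff_le_gaussNorm_div hc (hs_res M).hasGaussNorm k).trans
      (div_le_div_of_nonneg_right (hs_le M) (by positivity))) ?_
  simpa using hgeom.div_const (c ^ k)

theorem IsWeierstrassDegree.exists_coeff_sub_mul_eq_zero (hc : 0 < c) {f g : E⟦X⟧} {d : ℕ}
    (hg : IsRestricted c g) (hd : IsWeierstrassDegree c g d) (hf : IsRestricted c f) :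
    ∃ q, IsRestricted c q ∧ ∀ k, d ≤ k → coeff k (f - q * g) = 0 := by
  have hG := hd.gaussNorm_pos hc.le
  obtain ⟨a, hlt, ha1⟩ := exists_between ((div_lt_one hG).2 (hd.gaussNorm_sub_trunc_lt hc hg))
  have ha0 : 0 < a := (div_nonneg (gaussNorm_nonneg _ _ _ norm_nonneg) hG.le).trans_lt hlt
  exact exists_coeff_sub_mul_eq_zero_of_approx_div hc hg hG ha0.le ha1
    (fun f hf => hd.exists_approx_div hc hg ha0 ((div_lt_iff₀ hG).1 hlt).le hf) hf

end Completeness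

section EuclideanDomain

variable {E : Type*} [NormedField E] [IsUltrametricDist E] {c : ℝ} {f g : E⟦X⟧}

theorem IsRestricted.weierstrassDegree_le_mul (hc : 0 < c) (hf : IsRestricted c f)
    (hg : IsRestricted c g) (hg0 : g ≠ 0) :
    weierstrassDegree c f ≤ weierstrassDegree c (f * g) := by
  by_cases hf0 : f = 0
  · simp [hf0, weierstrassDegree_zero]
  obtain ⟨d, hd⟩ := hf.exists_isWeierstrassDegree hc hf0
  obtain ⟨e, he⟩ := hg.exists_isWeierstrassDegree hc hg0
  rw [hd.weierstrassDegree_eq, (hd.mul hc he).weierstrassDegree_eq]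
  exact WithBot.coe_le_coe.2 (Nat.le_add_right d e)

variable [CompleteSpace E]

theorem IsRestricted.exists_weierstrassDegree_sub_mul_lt (hc : 0 < c) (hf : IsRestricted c f)
    (hg : IsRestricted c g) (hg0 : g ≠ 0) :
    ∃ q, IsRestricted c q ∧ weierstrassDegree c (f - g * q) < weierstrassDegree c g := by
  obtain ⟨d, hd⟩ := hg.exists_isWeierstrassDegree hc hg0
  obtain ⟨q, hq, hr⟩ := hd.exists_coeff_sub_mul_eq_zero hc hg hf
  refine ⟨q, hq, ?_⟩
  rw [hd.weierstrassDegree_eq, mul_comm]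
  by_cases hr0 : f - q * g = 0
  · rw [hr0, weierstrassDegree_zero]
    exact WithBot.bot_lt_coe d
  obtain ⟨e, he⟩ := (hf.sub (isRestricted.mul c hq hg)).exists_isWeierstrassDegree hc hr0
  rw [he.weierstrassDegree_eq]
  exact WithBot.coe_lt_coe.2 (he.lt_of_coeff_eq_zero hc.le hr)

noncomputable abbrev IsRestricted.euclideanDomain (hc : 0 < c) :
    EuclideanDomain (IsRestricted.subring (R := E) c) :=
  let deg := fun f : IsRestricted.subring (R := E) c => weierstrassDegree c (f : E⟦X⟧)
  have hdiv (f g : IsRestricted.subring (R := E) c) (hg : g ≠ 0) :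
      ∃ q, deg (f - g * q) < deg g :=
    let ⟨q, hq, h⟩ := IsRestricted.exists_weierstrassDegree_sub_mul_lt hc f.2 g.2
      fun h => hg (Subtype.ext h)
    ⟨⟨q, hq⟩, h⟩
  open Classical in
  let quot f g := if hg : g = 0 then 0 else (hdiv f g hg).choose
  { (inferInstance : CommRing _), (inferInstance : Nontrivial _) with
    quotient := quot
    quotient_zero := fun _ => dif_pos rfl
    remainder := fun f g => f - g * quot f g
    quotient_mul_add_remainder_eq := fun f g => add_sub_cancel _ f
    r := InvImage (· < ·) deg
    r_wellFounded := InvImage.wf deg wellFounded_lt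
    remainder_lt := fun f g hg => by
      change deg _ < deg g
      simpa only [quot, dif_neg hg] using (hdiv f g hg).choose_spec
    mul_left_not_lt := fun f g hg => not_lt.2 <|
      IsRestricted.weierstrassDegree_le_mul hc f.2 g.2 fun h => hg (Subtype.ext h) }

end EuclideanDomain

end PowerSeries

theorem Hn_eq_isRestricted_subring (p : ℕ) [Fact (Nat.Prime p)] (E : Type) [NormedField E]
    [IsUltrametricDist E] (n : ℕ) :
    Hn p E n = PowerSeries.IsRestricted.subring ((p : ℝ) ^ (-1 / n : ℝ)) := by
  ext f
  change Tendsto _ _ _ ↔ PowerSeries.IsRestricted _ f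
  rw [PowerSeries.isRestricted_iff']
  refine Iff.of_eq (congrArg (Tendsto · atTop (𝓝 0)) (funext fun k => ?_))
  rw [← Real.rpow_natCast, ← Real.rpow_mul (Nat.cast_nonneg p)]
  ring_nf

theorem Hn_euclideanDomain_and_isPrincipalIdealRing_general
    (p : ℕ) [Fact (Nat.Prime p)]
    (E : Type) [NormedField E] [IsUltrametricDist E]
    [NormedAlgebra ℚ_[p] E] [FiniteDimensional ℚ_[p] E]
    (n : ℕ) :
    (∃ ed : EuclideanDomain ↥(Hn p E n),
        ed.toCommRing = (inferInstance : CommRing ↥(Hn p E n))) ∧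
      IsDomain ↥(Hn p E n) ∧ IsPrincipalIdealRing ↥(Hn p E n) := by
  have : CompleteSpace E := FiniteDimensional.complete ℚ_[p] E
  have hc : (0 : ℝ) < (p : ℝ) ^ (-1 / n : ℝ) :=
    Real.rpow_pos_of_pos (Nat.cast_pos.2 (Fact.out : p.Prime).pos) _
  rw [Hn_eq_isRestricted_subring]
  let := PowerSeries.IsRestricted.euclideanDomain (E := E) hc
  exact ⟨⟨_, rfl⟩, inferInstance, EuclideanDomain.to_principal_ideal_domain⟩

/-- **(Lazard.)**  For every `n ≥ 1`, the ring `ℋₙ` of rigid analytic functions on the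
closed disc of radius `p^{-1/n}` is a Euclidean ring (for a Euclidean structure compatible
with its ring structure); in particular it is an integral domain in which every ideal is
principal, i.e. a principal ideal domain. -/
theorem Hn_euclideanDomain_and_isPrincipalIdealRing
    (p : ℕ) [Fact (Nat.Prime p)]
    (E : Type) [NormedField E] [IsUltrametricDist E]
    [NormedAlgebra ℚ_[p] E] [FiniteDimensional ℚ_[p] E]
    (hnorm : ∀ x : ℚ_[p], ‖algebraMap ℚ_[p] E x‖ = ‖x‖)
    (hp : ‖(p : E)‖ = (p : ℝ)⁻¹)
    (n : ℕ) (hn : 1 ≤ n) :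
    (∃ ed : EuclideanDomain ↥(Hn p E n),
        ed.toCommRing = (inferInstance : CommRing ↥(Hn p E n))) ∧
      IsDomain ↥(Hn p E n) ∧ IsPrincipalIdealRing ↥(Hn p E n) :=
  Hn_euclideanDomain_and_isPrincipalIdealRing_general p E n
end
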